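/- Let U = Ũ_1·Ũ_2⋯Ũ_{N−r+1} (product in increasing order of indices), where the embedded factors are built from unitary matrices U_k ∈ ℂ^{(r+1)×(r+1)} (k = 1,…,N−r) and a unitary matrix U_{N−r+1} ∈ ℂ^{r×r}. Partition each conjugate transpose U_k^* = [[p_U(k), d_U(k)],[a_U(k), q_U(k)]] with blocks of sizes 1×r, 1×1, r×r, r×1, and set p_U(N−r+1) = U_{N−r+1}^*. Then U^* is a unitary matrix that is simultaneously a lower Green matrix of order r and an upper band matrix of order r; the matrices p_U(i), q_U(i), a_U(i) (i = 1,…,N−r), p_U(N−r+1) are lower Green generators of U^*; and U^*(k, k+r) = d_U(k) for k = 1,…,N−r. -/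

import Mathlib

/-!
Write `V k = U_kᴴ = [[p k, d k], [a k, q k]]`, so that `Uᴴ = Ṽ_{N-r+1} Ṽ_{N-r} ⋯ Ṽ_1`, and let
`e_j` be the `j`-th unit row. Left multiplication by `Ṽ_{m+1}` only mixes rows `m+1, …, m+r+1`,
and by induction `Ṽ_m ⋯ Ṽ_1` consists of the settled rows `p(i) X_{i-1} + d(i) e_{i+r}`
(`i ≤ m`), then the `r` rows
`X_m = [a^>_{m+1,0} | a^>_{m+1,1} q(1) | ⋯ | a^>_{m+1,m} q(m) | 0]`, then identity rows: the step
is `X_m = a(m) X_{m-1} + q(m) e_{m+r}`, which telescopes the products `a^>`. The last factor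
turns `X_{N-r}` into `U_{N-r+1}ᴴ X_{N-r}`. Everything is read off this closed form; for the rank
bound, the first `m + r` columns of every later `X_{m'}` are `a^>_{m'+1,m}` times those of `X_m`,
so `Uᴴ(k:N, 1:k+r-1)` factors through the `r` rows of `X_{k-1}`.
-/

open Matrix

noncomputable section

/-- `A(i,j) = 0` whenever `i - j > r` (1-based; identical in 0-based `Fin` indexing). -/
def IsLowerBand (N r : ℕ) (A : Matrix (Fin N) (Fin N) ℂ) : Prop :=
  ∀ i j : Fin N, (j : ℕ) + r < (i : ℕ) → A i j = 0

/-- `A(i,j) = 0` whenever `j - i > r`. -/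
def IsUpperBand (N r : ℕ) (A : Matrix (Fin N) (Fin N) ℂ) : Prop :=
  ∀ i j : Fin N, (i : ℕ) + r < (j : ℕ) → A i j = 0

/-- `rank B(k:N, 1:k+r-1) ≤ r` for every `k = 1, …, N-r` (1-based). -/
def IsLowerGreen (N r : ℕ) (B : Matrix (Fin N) (Fin N) ℂ) : Prop :=
  ∀ (k : ℕ) (hk1 : 1 ≤ k) (hk2 : k ≤ N - r),
    (B.submatrix
      (fun i : Fin (N - k + 1) => (⟨k - 1 + (i : ℕ), by have := i.isLt; omega⟩ : Fin N))
      (fun j : Fin (k + r - 1) => (⟨(j : ℕ), by have := j.isLt; omega⟩ : Fin N))).rank ≤ r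

/-- `rank B(1:k+r-1, k:N) ≤ r` for every `k = 1, …, N-r` (1-based). -/
def IsUpperGreen (N r : ℕ) (B : Matrix (Fin N) (Fin N) ℂ) : Prop :=
  ∀ (k : ℕ) (hk1 : 1 ≤ k) (hk2 : k ≤ N - r),
    (B.submatrix
      (fun i : Fin (k + r - 1) => (⟨(i : ℕ), by have := i.isLt; omega⟩ : Fin N))
      (fun j : Fin (N - k + 1) => (⟨k - 1 + (j : ℕ), by have := j.isLt; omega⟩ : Fin N))).rank ≤ r

/-- `a^>_{i,s} = a(i-1) a(i-2) ⋯ a(s+1)`, equal to `I_r` when `s ≥ i - 1`. -/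
def aGT (r : ℕ) (a : ℕ → Matrix (Fin r) (Fin r) ℂ) (i s : ℕ) :
    Matrix (Fin r) (Fin r) ℂ :=
  (((List.range' (s + 1) (i - 1 - s)).reverse).map a).prod

/-- `p(i) ∈ ℂ^{1×r}` (i = 1,…,N−r), `pLast = p(N−r+1) ∈ ℂ^{r×r}`, `q(j) ∈ ℂ^{r×1}`,
`a(k) ∈ ℂ^{r×r}` are lower Green generators of the `N×N` matrix `B`:
`B(i,1:r) = p(i)·a^>_{i,0}`, `B(i,r+s-1) = p(i)·a^>_{i,s-1}·q(s-1)` for `2 ≤ s ≤ i ≤ N-r`,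
and the analogous identities for the last `r` rows `B(N-r+1:N, ·)` with `pLast`. -/
def IsLowerGreenGenerators (N r : ℕ) (hNr : r < N)
    (p : ℕ → Matrix (Fin 1) (Fin r) ℂ) (q : ℕ → Matrix (Fin r) (Fin 1) ℂ)
    (a : ℕ → Matrix (Fin r) (Fin r) ℂ) (pLast : Matrix (Fin r) (Fin r) ℂ)
    (B : Matrix (Fin N) (Fin N) ℂ) : Prop :=
  (∀ (i : ℕ) (hi1 : 1 ≤ i) (hi2 : i ≤ N - r) (j : Fin r),
      B ⟨i - 1, by omega⟩ ⟨(j : ℕ), by have := j.isLt; omega⟩ = (p i * aGT r a i 0) 0 j)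
  ∧ (∀ (i : ℕ) (hi1 : 1 ≤ i) (hi2 : i ≤ N - r) (s : ℕ) (hs1 : 2 ≤ s) (hs2 : s ≤ i),
      B ⟨i - 1, by omega⟩ ⟨r + s - 2, by omega⟩
        = (p i * aGT r a i (s - 1) * q (s - 1)) 0 0)
  ∧ (∀ (t : Fin r) (j : Fin r),
      B ⟨N - r + (t : ℕ), by have := t.isLt; omega⟩ ⟨(j : ℕ), by have := j.isLt; omega⟩
        = (pLast * aGT r a (N - r + 1) 0) t j)
  ∧ (∀ (t : Fin r) (s : ℕ) (hs1 : 2 ≤ s) (hs2 : s ≤ N - r + 1),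
      B ⟨N - r + (t : ℕ), by have := t.isLt; omega⟩ ⟨r + s - 2, by omega⟩
        = (pLast * aGT r a (N - r + 1) (s - 1) * q (s - 1)) t 0)

/-- The embedded factor `I_{k-1} ⊕ M ⊕ I_{N-k-r}` (1-based block position `k`),
i.e. `M` occupies (1-based) rows and columns `k, …, k+r` of an `N×N` identity. -/
def embed (N r k : ℕ) (M : Matrix (Fin (r + 1)) (Fin (r + 1)) ℂ) :
    Matrix (Fin N) (Fin N) ℂ :=
  Matrix.of fun i j =>
    if h : k - 1 ≤ (i : ℕ) ∧ (i : ℕ) < k + r ∧ k - 1 ≤ (j : ℕ) ∧ (j : ℕ) < k + r then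
      M ⟨(i : ℕ) - (k - 1), by omega⟩ ⟨(j : ℕ) - (k - 1), by omega⟩
    else if (i : ℕ) = (j : ℕ) then 1 else 0

/-- The embedded last factor `I_{N-r} ⊕ M`. -/
def embedLast (N r : ℕ) (M : Matrix (Fin r) (Fin r) ℂ) : Matrix (Fin N) (Fin N) ℂ :=
  Matrix.of fun i j =>
    if h : N - r ≤ (i : ℕ) ∧ N - r ≤ (j : ℕ) then
      M ⟨(i : ℕ) - (N - r), by have := i.isLt; omega⟩
        ⟨(j : ℕ) - (N - r), by have := j.isLt; omega⟩
    else if (i : ℕ) = (j : ℕ) then 1 else 0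

/-- `G̃_1 · G̃_2 ⋯ G̃_{N-r}` (increasing order of indices). -/
def prodAsc (N r : ℕ) (G : ℕ → Matrix (Fin (r + 1)) (Fin (r + 1)) ℂ) :
    Matrix (Fin N) (Fin N) ℂ :=
  ((List.range' 1 (N - r)).map (fun k => embed N r k (G k))).prod

/-- `G̃_{N-r} · G̃_{N-r-1} ⋯ G̃_1` (decreasing order of indices). -/
def prodDesc (N r : ℕ) (G : ℕ → Matrix (Fin (r + 1)) (Fin (r + 1)) ℂ) :
    Matrix (Fin N) (Fin N) ℂ :=
  (((List.range' 1 (N - r)).reverse).map (fun k => embed N r k (G k))).prod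

/-- The `1×r` block `p` of the partition `M = [[p, d], [a, q]]`. -/
def blkP (r : ℕ) (M : Matrix (Fin (r + 1)) (Fin (r + 1)) ℂ) : Matrix (Fin 1) (Fin r) ℂ :=
  Matrix.of fun _ j => M 0 j.castSucc

/-- The `1×1` block `d` of the partition `M = [[p, d], [a, q]]`. -/
def blkD (r : ℕ) (M : Matrix (Fin (r + 1)) (Fin (r + 1)) ℂ) : ℂ := M 0 (Fin.last r)

/-- The `r×r` block `a` of the partition `M = [[p, d], [a, q]]`. -/
def blkA (r : ℕ) (M : Matrix (Fin (r + 1)) (Fin (r + 1)) ℂ) : Matrix (Fin r) (Fin r) ℂ :=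
  Matrix.of fun i j => M i.succ j.castSucc

/-- The `r×1` block `q` of the partition `M = [[p, d], [a, q]]`. -/
def blkQ (r : ℕ) (M : Matrix (Fin (r + 1)) (Fin (r + 1)) ℂ) : Matrix (Fin r) (Fin 1) ℂ :=
  Matrix.of fun i _ => M i.succ (Fin.last r)

/-- Assemble the `(r+1)×(r+1)` matrix `[[p, d], [a, q]]` from its blocks. -/
def mkBlk (r : ℕ) (p : Matrix (Fin 1) (Fin r) ℂ) (d : ℂ)
    (a : Matrix (Fin r) (Fin r) ℂ) (q : Matrix (Fin r) (Fin 1) ℂ) :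
    Matrix (Fin (r + 1)) (Fin (r + 1)) ℂ :=
  Matrix.of fun i j =>
    if hi : (i : ℕ) = 0 then
      if hj : (j : ℕ) < r then p 0 ⟨(j : ℕ), hj⟩ else d
    else
      if hj : (j : ℕ) < r then a ⟨(i : ℕ) - 1, by have := i.isLt; omega⟩ ⟨(j : ℕ), hj⟩
      else q ⟨(i : ℕ) - 1, by have := i.isLt; omega⟩ 0

/-- The elementary Gauss factor `[[1, 0_{1×r}], [-f, I_r]]`. -/
def elemL (r : ℕ) (f : Matrix (Fin r) (Fin 1) ℂ) :
    Matrix (Fin (r + 1)) (Fin (r + 1)) ℂ :=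
  Matrix.of fun i j =>
    if hi : (i : ℕ) = 0 then (if (j : ℕ) = 0 then 1 else 0)
    else if hj : (j : ℕ) = 0 then -f ⟨(i : ℕ) - 1, by have := i.isLt; omega⟩ 0
    else if (i : ℕ) = (j : ℕ) then 1 else 0

/-- The elementary factor `[[I_r, 0_{r×1}], [-g, 1]]`. -/
def elemLrow (r : ℕ) (g : Matrix (Fin 1) (Fin r) ℂ) :
    Matrix (Fin (r + 1)) (Fin (r + 1)) ℂ :=
  Matrix.of fun i j =>
    if hi : (i : ℕ) < r then
      (if hj : (j : ℕ) < r then (if (i : ℕ) = (j : ℕ) then 1 else 0) else 0)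
    else if hj : (j : ℕ) < r then -g 0 ⟨(j : ℕ), hj⟩ else 1

/-- All leading principal minors are nonzero. -/
def StronglyRegular (N : ℕ) (A : Matrix (Fin N) (Fin N) ℂ) : Prop :=
  ∀ (k : ℕ) (hk : k ≤ N), 1 ≤ k →
    (A.submatrix (Fin.castLE hk) (Fin.castLE hk)).det ≠ 0


theorem rank_submatrix_le_of_apply_eq_mul {R l m n o p : Type*} [CommRing R]
    [StrongRankCondition R] [Fintype m] [Fintype p] {B : Matrix l n R}
    (D : Matrix l m R) (C : Matrix m n R) (f : o → l) (g : p → n)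
    (h : ∀ i j, B (f i) (g j) = (D * C) (f i) (g j)) :
    (B.submatrix f g).rank ≤ Fintype.card m := by
  have hfactor : B.submatrix f g = D.submatrix f id * C.submatrix id g := by
    rw [← submatrix_mul _ _ _ _ _ Function.bijective_id]
    exact Matrix.ext h
  rw [hfactor]
  exact (rank_mul_le_right _ _).trans (rank_le_card_height _)

section WindowEmbed

variable {R : Type*} {N c w : ℕ}

def windowEmbed [Zero R] [One R] (N c w : ℕ) (M : Matrix (Fin w) (Fin w) R) :
    Matrix (Fin N) (Fin N) R :=
  Matrix.of fun i j =>
    if h : c ≤ (i : ℕ) ∧ (i : ℕ) < c + w ∧ c ≤ (j : ℕ) ∧ (j : ℕ) < c + w then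
      M ⟨(i : ℕ) - c, by omega⟩ ⟨(j : ℕ) - c, by omega⟩
    else if (i : ℕ) = (j : ℕ) then 1 else 0

theorem windowEmbed_mul_apply [Semiring R] {n : Type*} (hcw : c + w ≤ N)
    (M : Matrix (Fin w) (Fin w) R) (B : Matrix (Fin N) n R) (i : Fin N) (j : n) :
    (windowEmbed N c w M * B) i j =
      if h : c ≤ (i : ℕ) ∧ (i : ℕ) < c + w then
        ∑ u : Fin w, M ⟨(i : ℕ) - c, by omega⟩ u * B ⟨c + u, by omega⟩ j
      else B i j := by
  rw [mul_apply]
  split_ifs with hi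
  · symm
    refine Fintype.sum_of_injective (fun u : Fin w => (⟨c + u, by omega⟩ : Fin N))
      (fun u v huv => Fin.ext (by simpa using huv)) _ _ (fun l hl => ?_) (fun u => ?_)
    · have hl' : ¬ (c ≤ (l : ℕ) ∧ (l : ℕ) < c + w) := fun h =>
        hl ⟨⟨l - c, by omega⟩, Fin.ext (by simp; omega)⟩
      simp only [windowEmbed, of_apply]
      rw [dif_neg (by tauto), if_neg (by omega), zero_mul]
    · simp only [windowEmbed, of_apply]
      rw [dif_pos (by omega)]
      congr 3
      simp
  · rw [Fintype.sum_eq_single i (fun l hl => ?_)]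
    · simp [windowEmbed, hi]
    · simp only [windowEmbed, of_apply]
      rw [dif_neg (by tauto), if_neg (fun h => hl (Fin.ext h.symm)), zero_mul]

theorem windowEmbed_mul [Semiring R] (hcw : c + w ≤ N) (M M' : Matrix (Fin w) (Fin w) R) :
    windowEmbed N c w M * windowEmbed N c w M' = windowEmbed N c w (M * M') := by
  ext i j
  rw [windowEmbed_mul_apply hcw]
  split_ifs with hi
  · by_cases hj : c ≤ (j : ℕ) ∧ (j : ℕ) < c + w
    · simp only [windowEmbed, of_apply, mul_apply]
      rw [dif_pos (by omega)]
      refine Finset.sum_congr rfl fun u _ => ?_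
      rw [dif_pos (by omega)]
      congr 3
      simp
    · simp only [windowEmbed, of_apply]
      rw [dif_neg (by tauto), if_neg (by omega)]
      refine Finset.sum_eq_zero fun u _ => ?_
      rw [dif_neg (by tauto), if_neg (by omega), mul_zero]
  · simp only [windowEmbed, of_apply]
    rw [dif_neg (by tauto), dif_neg (by tauto)]

theorem windowEmbed_one [Zero R] [One R] :
    windowEmbed N c w (1 : Matrix (Fin w) (Fin w) R) = 1 := by
  ext i j
  simp only [windowEmbed, of_apply, one_apply, Fin.ext_iff]
  split_ifs <;> first | rfl | (exfalso; omega)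

theorem windowEmbed_conjTranspose [Semiring R] [StarRing R] (M : Matrix (Fin w) (Fin w) R) :
    (windowEmbed N c w M)ᴴ = windowEmbed N c w Mᴴ := by
  ext i j
  simp only [windowEmbed, conjTranspose_apply, of_apply]
  split_ifs <;> first | rfl | (exfalso; omega) | simp

theorem windowEmbed_mem_unitaryGroup [CommRing R] [StarRing R] (hcw : c + w ≤ N)
    {M : Matrix (Fin w) (Fin w) R} (hM : M ∈ unitaryGroup (Fin w) R) :
    windowEmbed N c w M ∈ unitaryGroup (Fin N) R := by
  rw [mem_unitaryGroup_iff', star_eq_conjTranspose] at hM ⊢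
  rw [windowEmbed_conjTranspose, windowEmbed_mul hcw, hM, windowEmbed_one]

end WindowEmbed

theorem embed_eq_windowEmbed {N r k : ℕ} (hk : 1 ≤ k)
    (M : Matrix (Fin (r + 1)) (Fin (r + 1)) ℂ) :
    embed N r k M = windowEmbed N (k - 1) (r + 1) M := by
  ext i j
  simp only [embed, windowEmbed, of_apply, show k - 1 + (r + 1) = k + r by omega]

theorem embedLast_eq_windowEmbed {N r : ℕ} (hrN : r ≤ N) (M : Matrix (Fin r) (Fin r) ℂ) :
    embedLast N r M = windowEmbed N (N - r) r M := by
  ext i j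
  simp only [embedLast, windowEmbed, of_apply, show N - r + r = N by omega, i.isLt, j.isLt,
    true_and, and_true]

section ProductsOfA

variable {r : ℕ} (a : ℕ → Matrix (Fin r) (Fin r) ℂ)

theorem aGT_of_le {i s : ℕ} (h : i ≤ s + 1) : aGT r a i s = 1 := by
  simp [aGT, show i - 1 - s = 0 by omega]

theorem mul_aGT {i s : ℕ} (h : s + 1 ≤ i) : a i * aGT r a i s = aGT r a (i + 1) s := by
  rw [aGT, aGT, show i + 1 - 1 - s = (i - 1 - s) + 1 by omega, List.range'_1_concat,
    show s + 1 + (i - 1 - s) = i by omega]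
  simp

theorem aGT_mul_aGT {i m s : ℕ} (hsm : s ≤ m) (hmi : m < i) :
    aGT r a i m * aGT r a (m + 1) s = aGT r a i s := by
  rw [aGT, aGT, aGT, show i - 1 - s = (m + 1 - 1 - s) + (i - 1 - m) by omega,
    ← List.range'_append_1, show s + 1 + (m + 1 - 1 - s) = m + 1 by omega]
  simp [List.prod_append]

end ProductsOfA

section ActiveRows

variable {N r : ℕ} (V : ℕ → Matrix (Fin (r + 1)) (Fin (r + 1)) ℂ)

local notation "A" => fun k => blkA r (V k)

/-- With `V k = [[p k, d k], [a k, q k]]`, the `r` rows of `Ṽ_m ⋯ Ṽ_1` below row `m` (1-based):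
`[a^>_{m+1,0} | a^>_{m+1,1} q(1) | ⋯ | a^>_{m+1,m} q(m) | 0]`. -/
def activeRows (m : ℕ) : Matrix (Fin r) (Fin N) ℂ :=
  Matrix.of fun t j =>
    if hj : (j : ℕ) < r then aGT r A (m + 1) 0 t ⟨j, hj⟩
    else if (j : ℕ) < m + r then
      (aGT r A (m + 1) ((j : ℕ) + 1 - r) * blkQ r (V ((j : ℕ) + 1 - r))) t 0
    else 0

variable {ι : Type*} (M : Matrix ι (Fin r) ℂ) (m : ℕ) (t : ι) (j : Fin N)

theorem mul_activeRows_apply_of_lt (hj : (j : ℕ) < r) :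
    (M * activeRows V m) t j = (M * aGT r A (m + 1) 0) t ⟨j, hj⟩ := by
  simp only [mul_apply, activeRows, of_apply, dif_pos hj]

theorem mul_activeRows_apply_of_le_of_lt (hrj : r ≤ (j : ℕ)) (hj : (j : ℕ) < m + r) :
    (M * activeRows V m) t j =
      (M * aGT r A (m + 1) ((j : ℕ) + 1 - r) * blkQ r (V ((j : ℕ) + 1 - r))) t 0 := by
  simp only [Matrix.mul_assoc, mul_apply (M := M), activeRows, of_apply, dif_neg (not_lt.2 hrj),
    if_pos hj]

theorem mul_activeRows_apply_of_le (hj : m + r ≤ (j : ℕ)) : (M * activeRows V m) t j = 0 := by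
  simp only [mul_apply, activeRows, of_apply, dif_neg (show ¬ (j : ℕ) < r by omega),
    if_neg (show ¬ (j : ℕ) < m + r by omega), mul_zero, Finset.sum_const_zero]

theorem mul_activeRows_apply_of_lt_add {m' : ℕ} (hm : m ≤ m') (hj : (j : ℕ) < m + r) :
    (M * activeRows V m') t j = (M * aGT r A (m' + 1) m * activeRows V m) t j := by
  by_cases hjr : (j : ℕ) < r
  · rw [mul_activeRows_apply_of_lt _ _ _ _ _ hjr, mul_activeRows_apply_of_lt _ _ _ _ _ hjr,
      Matrix.mul_assoc, aGT_mul_aGT _ (Nat.zero_le m) (by omega)]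
  · rw [mul_activeRows_apply_of_le_of_lt _ _ _ _ _ (not_lt.1 hjr) (by omega),
      mul_activeRows_apply_of_le_of_lt _ _ _ _ _ (not_lt.1 hjr) hj,
      ← aGT_mul_aGT _ (show (j : ℕ) + 1 - r ≤ m by omega) (show m < m' + 1 by omega)]
    simp only [Matrix.mul_assoc]

theorem activeRows_zero (t : Fin r) : activeRows V 0 t j = if (j : ℕ) = t then 1 else 0 := by
  by_cases hj : (j : ℕ) < r
  · simp [activeRows, hj, aGT_of_le, one_apply, Fin.ext_iff, eq_comm]
  · simp [activeRows, hj]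
    omega

theorem activeRows_succ (t : Fin r) :
    activeRows V (m + 1) t j =
      (blkA r (V (m + 1)) * activeRows V m) t j +
        if (j : ℕ) = m + r then blkQ r (V (m + 1)) t 0 else 0 := by
  -- read the entries of `activeRows V (m + 1)` through the `mul_activeRows` lemmas
  rw [← Matrix.one_mul (activeRows V (m + 1))]
  rcases lt_or_ge (j : ℕ) r with hjr | hjr
  · rw [mul_activeRows_apply_of_lt _ _ _ _ _ hjr, mul_activeRows_apply_of_lt _ _ _ _ _ hjr,
      if_neg (by omega), add_zero, Matrix.one_mul, ← mul_aGT _ (i := m + 1) (by omega)]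
  rcases lt_or_ge (j : ℕ) (m + r) with hjm | hjm
  · rw [mul_activeRows_apply_of_le_of_lt _ _ _ _ _ hjr (by omega),
      mul_activeRows_apply_of_le_of_lt _ _ _ _ _ hjr hjm, if_neg (by omega), add_zero,
      Matrix.one_mul, ← mul_aGT _ (i := m + 1) (by omega)]
  rw [mul_activeRows_apply_of_le _ _ _ _ _ hjm]
  rcases eq_or_lt_of_le hjm with hj | hj
  · rw [mul_activeRows_apply_of_le_of_lt _ _ _ _ _ hjr (by omega), if_pos hj.symm, zero_add,
      show (j : ℕ) + 1 - r = m + 1 by omega, aGT_of_le _ le_rfl, Matrix.one_mul, Matrix.one_mul]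
  · rw [mul_activeRows_apply_of_le _ _ _ _ _ (by omega), if_neg (by omega), add_zero]

end ActiveRows

section PartialProducts

variable {N r : ℕ} (V : ℕ → Matrix (Fin (r + 1)) (Fin (r + 1)) ℂ)

/-- Row `i` (0-based) of `Ṽ_m ⋯ Ṽ_1` for every `m > i`. -/
def settledRow (i : ℕ) (j : Fin N) : ℂ :=
  (blkP r (V (i + 1)) * activeRows V i) 0 j + if (j : ℕ) = i + r then blkD r (V (i + 1)) else 0

/-- The closed form of `Ṽ_m ⋯ Ṽ_1`. -/
def partialAdjoint (m : ℕ) : Matrix (Fin N) (Fin N) ℂ :=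
  Matrix.of fun i j =>
    if h0 : (i : ℕ) < m then settledRow V i j
    else if h : (i : ℕ) < m + r then activeRows V m ⟨(i : ℕ) - m, by omega⟩ j
    else if (i : ℕ) = (j : ℕ) then 1 else 0

variable {V} {m : ℕ} {i : Fin N} (j : Fin N)

theorem partialAdjoint_apply_of_lt (h : (i : ℕ) < m) :
    partialAdjoint V m i j = settledRow V i j := by
  simp [partialAdjoint, h]

theorem partialAdjoint_apply_of_le_of_lt (h₁ : m ≤ (i : ℕ)) (h₂ : (i : ℕ) < m + r) :
    partialAdjoint V m i j = activeRows V m ⟨(i : ℕ) - m, by omega⟩ j := by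
  simp [partialAdjoint, h₂, not_lt.2 h₁]

theorem partialAdjoint_apply_of_le (h : m + r ≤ (i : ℕ)) :
    partialAdjoint V m i j = if (i : ℕ) = (j : ℕ) then 1 else 0 := by
  simp [partialAdjoint, show ¬ (i : ℕ) < m by omega, show ¬ (i : ℕ) < m + r by omega]

variable (V)

theorem partialAdjoint_zero : partialAdjoint (N := N) V 0 = 1 := by
  ext i j
  simp only [one_apply, Fin.ext_iff]
  rcases lt_or_ge (i : ℕ) r with hi | hi
  · rw [partialAdjoint_apply_of_le_of_lt _ (Nat.zero_le _) (by omega), activeRows_zero]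
    simp [eq_comm]
  · rw [partialAdjoint_apply_of_le _ (by omega)]

theorem windowEmbed_mul_partialAdjoint (hm : m + 1 + r ≤ N) :
    windowEmbed N m (r + 1) (V (m + 1)) * partialAdjoint V m = partialAdjoint V (m + 1) := by
  ext i j
  rw [windowEmbed_mul_apply (by omega)]
  split_ifs with hi
  · have h_active (u : Fin r) : partialAdjoint V m ⟨m + u, by omega⟩ j = activeRows V m u j := by
      rw [partialAdjoint_apply_of_le_of_lt _ (by simp) (by simp)]
      simp
    have h_identity : partialAdjoint V m ⟨m + r, by omega⟩ j = if m + r = (j : ℕ) then 1 else 0 :=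
      partialAdjoint_apply_of_le _ le_rfl
    simp only [Fin.sum_univ_castSucc, Fin.val_castSucc, Fin.val_last, h_active, h_identity]
    rcases eq_or_lt_of_le hi.1 with him | him
    · rw [partialAdjoint_apply_of_lt _ (by omega)]
      subst him
      simp [settledRow, mul_apply, blkP, blkD, eq_comm]
    · rw [partialAdjoint_apply_of_le_of_lt _ (by omega) (by omega)]
      set t : Fin r := ⟨(i : ℕ) - (m + 1), by omega⟩
      have ht : (⟨(i : ℕ) - m, by omega⟩ : Fin (r + 1)) = t.succ := Fin.ext (by simp [t]; omega)
      rw [ht, activeRows_succ]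
      simp [mul_apply, blkA, blkQ, eq_comm]
  · rcases not_and_or.1 hi with hi | hi
    · rw [partialAdjoint_apply_of_lt _ (by omega), partialAdjoint_apply_of_lt _ (by omega)]
    · rw [partialAdjoint_apply_of_le _ (by omega), partialAdjoint_apply_of_le _ (by omega)]

theorem conjTranspose_list_prod_embed (Uk : ℕ → Matrix (Fin (r + 1)) (Fin (r + 1)) ℂ)
    (hm : m + r ≤ N) :
    (((List.range' 1 m).map fun k => embed N r k (Uk k)).prod)ᴴ =
      partialAdjoint (fun k => (Uk k)ᴴ) m := by
  induction m with
  | zero => simp [partialAdjoint_zero]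
  | succ m ih =>
    rw [List.range'_1_concat, List.map_append, List.prod_append, List.map_singleton,
      List.prod_singleton, conjTranspose_mul, show 1 + m = m + 1 by omega,
      embed_eq_windowEmbed (by omega), windowEmbed_conjTranspose, ih (by omega),
      Nat.add_sub_cancel]
    exact windowEmbed_mul_partialAdjoint (fun k => (Uk k)ᴴ) hm

end PartialProducts

section LowerGreenForm

variable {N r : ℕ} (V : ℕ → Matrix (Fin (r + 1)) (Fin (r + 1)) ℂ)

local notation "A" => fun k => blkA r (V k)

theorem settledRow_apply_of_lt (i : ℕ) (j : Fin N) (hj : (j : ℕ) < r) :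
    settledRow V i j = (blkP r (V (i + 1)) * aGT r A (i + 1) 0) 0 ⟨j, hj⟩ := by
  rw [settledRow, mul_activeRows_apply_of_lt _ _ _ _ _ hj, if_neg (by omega), add_zero]

theorem settledRow_apply_of_le_of_lt (i : ℕ) (j : Fin N) (hrj : r ≤ (j : ℕ))
    (hj : (j : ℕ) < i + r) :
    settledRow V i j = (blkP r (V (i + 1)) * aGT r A (i + 1) ((j : ℕ) + 1 - r) *
      blkQ r (V ((j : ℕ) + 1 - r))) 0 0 := by
  rw [settledRow, mul_activeRows_apply_of_le_of_lt _ _ _ _ _ hrj hj, if_neg (by omega), add_zero]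

theorem settledRow_apply_of_add_le (i : ℕ) (j : Fin N) (hj : i + r ≤ (j : ℕ)) :
    settledRow V i j = if (j : ℕ) = i + r then blkD r (V (i + 1)) else 0 := by
  rw [settledRow, mul_activeRows_apply_of_le _ _ _ _ _ hj, zero_add]

variable (P : Matrix (Fin r) (Fin r) ℂ)

/-- The closed form of `(Ũ_1 ⋯ Ũ_{N-r+1})ᴴ` for `V k = U_kᴴ` and `P = U_{N-r+1}ᴴ`. -/
def lowerGreenForm : Matrix (Fin N) (Fin N) ℂ :=
  Matrix.of fun i j =>
    if h : (i : ℕ) < N - r then settledRow V i j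
    else (P * activeRows V (N - r)) ⟨(i : ℕ) - (N - r), by have := i.isLt; omega⟩ j

variable {V P} (j : Fin N)

theorem lowerGreenForm_apply_of_lt {i : ℕ} (hi : i < N - r) :
    lowerGreenForm V P ⟨i, by omega⟩ j = settledRow V i j := by
  simp [lowerGreenForm, hi]

theorem lowerGreenForm_apply_of_le {i : ℕ} (hi₁ : N - r ≤ i) (hi₂ : i < N) :
    lowerGreenForm V P ⟨i, hi₂⟩ j = (P * activeRows V (N - r)) ⟨i - (N - r), by omega⟩ j := by
  simp [lowerGreenForm, not_lt.2 hi₁]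

variable (V P)

theorem windowEmbed_mul_partialAdjoint_eq_lowerGreenForm (hrN : r ≤ N) :
    windowEmbed N (N - r) r P * partialAdjoint V (N - r) = lowerGreenForm V P := by
  ext i j
  rw [windowEmbed_mul_apply (by omega)]
  split_ifs with hi
  · rw [lowerGreenForm_apply_of_le _ hi.1, mul_apply]
    refine Finset.sum_congr rfl fun u _ => ?_
    rw [partialAdjoint_apply_of_le_of_lt _ (by simp) (by simp)]
    simp
  · rw [partialAdjoint_apply_of_lt _ (by omega), lowerGreenForm_apply_of_lt _ (by omega)]

theorem lowerGreenForm_isUpperBand : IsUpperBand N r (lowerGreenForm V P) := by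
  intro i j hij
  rw [lowerGreenForm_apply_of_lt _ (by omega), settledRow_apply_of_add_le _ _ _ hij.le,
    if_neg hij.ne']

theorem lowerGreenForm_apply_superdiag {k : ℕ} (hk₁ : 1 ≤ k) (hk₂ : k ≤ N - r) :
    lowerGreenForm (N := N) V P ⟨k - 1, by omega⟩ ⟨k + r - 1, by omega⟩ = blkD r (V k) := by
  rw [lowerGreenForm_apply_of_lt _ (show k - 1 < N - r by omega),
    settledRow_apply_of_add_le _ _ _ (by simp; omega), if_pos (by simp; omega),
    Nat.sub_add_cancel hk₁]

theorem lowerGreenForm_isLowerGreenGenerators (hNr : r < N) :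
    IsLowerGreenGenerators N r hNr (fun k => blkP r (V k)) (fun k => blkQ r (V k)) A P
      (lowerGreenForm V P) := by
  refine ⟨fun i hi₁ hi₂ j => ?_, fun i hi₁ hi₂ s hs₁ hs₂ => ?_, fun t j => ?_,
    fun t s hs₁ hs₂ => ?_⟩
  · rw [lowerGreenForm_apply_of_lt _ (show i - 1 < N - r by omega),
      settledRow_apply_of_lt (N := N) V (i - 1) ⟨j, by omega⟩ j.isLt, Nat.sub_add_cancel hi₁]
  · rw [lowerGreenForm_apply_of_lt _ (show i - 1 < N - r by omega),
      settledRow_apply_of_le_of_lt (N := N) V (i - 1) ⟨r + s - 2, by omega⟩ (by simp; omega)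
        (by simp; omega),
      Nat.sub_add_cancel hi₁]
    simp only [show r + s - 2 + 1 - r = s - 1 by omega]
  · rw [lowerGreenForm_apply_of_le _ (by omega),
      mul_activeRows_apply_of_lt (N := N) V P _ _ ⟨j, by omega⟩ j.isLt]
    simp
  · rw [lowerGreenForm_apply_of_le _ (by omega),
      mul_activeRows_apply_of_le_of_lt (N := N) V P _ _ ⟨r + s - 2, by omega⟩ (by simp; omega)
        (by simp; omega)]
    simp [show r + s - 2 + 1 - r = s - 1 by omega]

/-- The left factor of `lowerGreenForm V P = lowerGreenCoeff V P m * activeRows V m` on rows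
`≥ m` and columns `< m + r`. -/
def lowerGreenCoeff (m : ℕ) : Matrix (Fin N) (Fin r) ℂ :=
  Matrix.of fun i u =>
    if h : (i : ℕ) < N - r then (blkP r (V (i + 1)) * aGT r A (i + 1) m) 0 u
    else (P * aGT r A (N - r + 1) m) ⟨(i : ℕ) - (N - r), by have := i.isLt; omega⟩ u

theorem lowerGreenForm_apply_eq_lowerGreenCoeff_mul {m : ℕ} (hm : m ≤ N - r) (i j : Fin N)
    (hi : m ≤ (i : ℕ)) (hj : (j : ℕ) < m + r) :
    lowerGreenForm V P i j = (lowerGreenCoeff V P m * activeRows V m) i j := by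
  by_cases h : (i : ℕ) < N - r
  · rw [lowerGreenForm_apply_of_lt j h, settledRow, if_neg (by omega), add_zero,
      mul_activeRows_apply_of_lt_add V _ m 0 j hi hj]
    simp only [mul_apply, lowerGreenCoeff, of_apply, dif_pos h]
  · rw [lowerGreenForm_apply_of_le j (not_lt.1 h) i.isLt,
      mul_activeRows_apply_of_lt_add V _ m _ j hm hj]
    simp only [mul_apply, lowerGreenCoeff, of_apply, dif_neg h]

theorem lowerGreenForm_isLowerGreen : IsLowerGreen N r (lowerGreenForm V P) := by
  intro k hk₁ hk₂
  refine (rank_submatrix_le_of_apply_eq_mul (lowerGreenCoeff V P (k - 1))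
    (activeRows V (k - 1)) _ _ fun i j => ?_).trans_eq (Fintype.card_fin r)
  exact lowerGreenForm_apply_eq_lowerGreenCoeff_mul V P (by omega) _ _ (by simp)
    (by simp; omega)

end LowerGreenForm

theorem prodAsc_mem_unitaryGroup {N r : ℕ} {Uk : ℕ → Matrix (Fin (r + 1)) (Fin (r + 1)) ℂ}
    (hUk : ∀ k, 1 ≤ k → k ≤ N - r → Uk k ∈ unitaryGroup (Fin (r + 1)) ℂ) :
    prodAsc N r Uk ∈ unitaryGroup (Fin N) ℂ := by
  refine Submonoid.list_prod_mem _ fun M hM => ?_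
  obtain ⟨k, hk, rfl⟩ := List.mem_map.1 hM
  rw [List.mem_range'_1] at hk
  rw [embed_eq_windowEmbed hk.1]
  exact windowEmbed_mem_unitaryGroup (by omega) (hUk k hk.1 (by omega))

theorem embedLast_mem_unitaryGroup {N r : ℕ} (hrN : r ≤ N) {M : Matrix (Fin r) (Fin r) ℂ}
    (hM : M ∈ unitaryGroup (Fin r) ℂ) : embedLast N r M ∈ unitaryGroup (Fin N) ℂ := by
  rw [embedLast_eq_windowEmbed hrN]
  exact windowEmbed_mem_unitaryGroup (by omega) hM

theorem conjTranspose_prodAsc_mul_embedLast {N r : ℕ} (hrN : r ≤ N)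
    (Uk : ℕ → Matrix (Fin (r + 1)) (Fin (r + 1)) ℂ) (Ulast : Matrix (Fin r) (Fin r) ℂ) :
    (prodAsc N r Uk * embedLast N r Ulast)ᴴ = lowerGreenForm (fun k => (Uk k)ᴴ) Ulastᴴ := by
  rw [conjTranspose_mul, embedLast_eq_windowEmbed hrN, windowEmbed_conjTranspose, prodAsc,
    conjTranspose_list_prod_embed _ (by omega),
    windowEmbed_mul_partialAdjoint_eq_lowerGreenForm _ _ hrN]

/-- If `U = Ũ_1·Ũ_2⋯Ũ_{N-r+1}` is a product of embedded unitary factors, then `U*` is a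
unitary lower Green and upper band matrix of order `r`, whose lower Green generators are
given by the blocks of the partitions `U_k* = [[p_U(k), d_U(k)], [a_U(k), q_U(k)]]`,
`p_U(N-r+1) = U_{N-r+1}*`, and whose diagonal entries satisfy `U*(k, k+r) = d_U(k)`. -/
theorem adjoint_product_is_lowerGreen_upperBand (N r : ℕ) (hNr : r < N)
    (Uk : ℕ → Matrix (Fin (r + 1)) (Fin (r + 1)) ℂ) (Ulast : Matrix (Fin r) (Fin r) ℂ)
    (hUk : ∀ (k : ℕ), 1 ≤ k → k ≤ N - r → Uk k ∈ Matrix.unitaryGroup (Fin (r + 1)) ℂ)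
    (hUlast : Ulast ∈ Matrix.unitaryGroup (Fin r) ℂ)
    (U : Matrix (Fin N) (Fin N) ℂ)
    (hU : U = prodAsc N r Uk * embedLast N r Ulast) :
    Uᴴ ∈ Matrix.unitaryGroup (Fin N) ℂ ∧
    IsLowerGreen N r Uᴴ ∧ IsUpperBand N r Uᴴ ∧
    IsLowerGreenGenerators N r hNr (fun k => blkP r ((Uk k)ᴴ)) (fun k => blkQ r ((Uk k)ᴴ))
      (fun k => blkA r ((Uk k)ᴴ)) Ulastᴴ Uᴴ ∧
    (∀ (k : ℕ) (hk1 : 1 ≤ k) (hk2 : k ≤ N - r),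
      Uᴴ ⟨k - 1, by omega⟩ ⟨k + r - 1, by omega⟩ = blkD r ((Uk k)ᴴ)) := by
  subst hU
  refine ⟨Unitary.star_mem (mul_mem (prodAsc_mem_unitaryGroup hUk)
    (embedLast_mem_unitaryGroup hNr.le hUlast)), ?_⟩
  rw [conjTranspose_prodAsc_mul_embedLast hNr.le]
  exact ⟨lowerGreenForm_isLowerGreen _ _, lowerGreenForm_isUpperBand _ _,
    lowerGreenForm_isLowerGreenGenerators _ _ hNr,
    fun k hk₁ hk₂ => lowerGreenForm_apply_superdiag _ _ hk₁ hk₂⟩
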